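/- arXiv:2207.04000 — 4 statements merged into one kernel-verified Lean document; each statement's English description precedes it below -/
import Mathlib

section
/- In a pre-measure space, let i, j ∈ I and suppose that on the common domain F' := (λ₀¹(i) ∪ λ₀⁰(i)) ∩ (λ₀¹(j) ∪ λ₀⁰(j)) the characteristic function of λ₀(i) is pointwise ≤ the characteristic function of λ₀(j). Then μ(i) ≤ μ(j). -/
open Filter Topology

/-- Iterated meet `⋀_{n=0}^{m} α(n)` of a sequence of indices under a binary
operation `w`. -/
def iterMeet {I : Type*} (w : I → I → I) (α : ℕ → I) : ℕ → I
  | 0 => α 0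
  | n + 1 => w (iterMeet w α n) (α (n + 1))

/-- A pre-measure space `(X, I, λ, J, ν, μ)` in the sense of Bishop-style
constructive measure theory: `λ` is an `I`-set of complemented subsets of `X`
(with positive parts `lamPos` and negative parts `lamNeg`), a subfamily via the
embedding `h` of the `J`-set `ν` of complemented subsets, the operations
`∧, ∨, ∼` on indices realize intersection, union and complement of the
complemented subsets, and `μ : I → ℝ≥0` satisfies (PMS1)–(PMS4). -/
structure PreMeasureSpace (X I J : Type*) where
  inhab : Nonempty X
  apart : X → X → Prop
  apart_irrefl : ∀ x y : X, x = y → apart x y → False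
  apart_symm : ∀ x y : X, apart x y → apart y x
  apart_cotrans : ∀ x y : X, apart x y → ∀ z : X, apart x z ∨ apart y z
  lamPos : I → Set X
  lamNeg : I → Set X
  lam_apart : ∀ i, ∀ x ∈ lamPos i, ∀ y ∈ lamNeg i, apart x y
  lam_set : ∀ i j : I, lamPos i = lamPos j → lamNeg i = lamNeg j → i = j
  nuPos : J → Set X
  nuNeg : J → Set X
  nu_apart : ∀ j, ∀ x ∈ nuPos j, ∀ y ∈ nuNeg j, apart x y
  h : I → J
  h_inj : Function.Injective h
  h_pos : ∀ i, lamPos i = nuPos (h i)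
  h_neg : ∀ i, lamNeg i = nuNeg (h i)
  wedgeJ : J → J → J
  veeJ : J → J → J
  complJ : J → J
  wedgeI : I → I → I
  veeI : I → I → I
  sminusI : I → I → I
  h_wedge : ∀ i j, h (wedgeI i j) = wedgeJ (h i) (h j)
  h_vee : ∀ i j, h (veeI i j) = veeJ (h i) (h j)
  h_sminus : ∀ i j, h (sminusI i j) = wedgeJ (h i) (complJ (h j))
  mu : I → ℝ
  mu_nonneg : ∀ i, 0 ≤ mu i
  wedge_pos : ∀ i j, nuPos (wedgeJ i j) = nuPos i ∩ nuPos j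
  wedge_neg : ∀ i j, nuNeg (wedgeJ i j) =
    (nuPos i ∩ nuNeg j) ∪ (nuNeg i ∩ nuPos j) ∪ (nuNeg i ∩ nuNeg j)
  vee_pos : ∀ i j, nuPos (veeJ i j) =
    (nuPos i ∩ nuNeg j) ∪ (nuNeg i ∩ nuPos j) ∪ (nuPos i ∩ nuPos j)
  vee_neg : ∀ i j, nuNeg (veeJ i j) = nuNeg i ∩ nuNeg j
  compl_pos : ∀ j, nuPos (complJ j) = nuNeg j
  compl_neg : ∀ j, nuNeg (complJ j) = nuPos j
  pms1 : ∀ i j : I, mu i + mu j = mu (veeI i j) + mu (wedgeI i j)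
  pms2 : ∀ (i : I) (j : J) (k : I), h k = wedgeJ (h i) j →
    ∃ l : I, h l = wedgeJ (h i) (complJ j) ∧ mu i = mu k + mu l
  pms3 : ∃ i : I, 0 < mu i
  pms4 : ∀ (α : ℕ → I) (ℓ : ℝ),
    Tendsto (fun m => mu (iterMeet wedgeI α m)) atTop (𝓝 ℓ) → 0 < ℓ →
    ∃ x : X, ∀ n, x ∈ lamPos (α n)

/-- The characteristic function of the complemented subset `λ₀(i)`:
`1` on the positive part, `0` elsewhere (in particular on the negative part). -/
noncomputable def PreMeasureSpace.chi {X I J : Type*} (M : PreMeasureSpace X I J)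
    (i : I) (x : X) : ℝ := by
  classical exact if x ∈ M.lamPos i then 1 else 0

lemma PreMeasureSpace.lamPos_wedge {X I J : Type*} (M : PreMeasureSpace X I J)
    (a b : I) : M.lamPos (M.wedgeI a b) = M.lamPos a ∩ M.lamPos b := by
  rw [M.h_pos, M.h_wedge, M.wedge_pos, ← M.h_pos, ← M.h_pos]

lemma PreMeasureSpace.lamNeg_wedge {X I J : Type*} (M : PreMeasureSpace X I J)
    (a b : I) : M.lamNeg (M.wedgeI a b) =
      (M.lamPos a ∩ M.lamNeg b) ∪ (M.lamNeg a ∩ M.lamPos b) ∪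
      (M.lamNeg a ∩ M.lamNeg b) := by
  rw [M.h_neg, M.h_wedge, M.wedge_neg, ← M.h_pos, ← M.h_pos, ← M.h_neg, ← M.h_neg]

lemma PreMeasureSpace.wedge_self {X I J : Type*} (M : PreMeasureSpace X I J)
    (a : I) : M.wedgeI a a = a := by
  apply M.lam_set
  · rw [M.lamPos_wedge, Set.inter_self]
  · rw [M.lamNeg_wedge]
    ext x
    constructor
    · rintro ((⟨_, h⟩ | ⟨h, _⟩) | ⟨h, _⟩) <;> exact h
    · exact fun h => Or.inr ⟨h, h⟩

lemma PreMeasureSpace.wedge_comm {X I J : Type*} (M : PreMeasureSpace X I J)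
    (a b : I) : M.wedgeI a b = M.wedgeI b a := by
  apply M.lam_set
  · rw [M.lamPos_wedge, M.lamPos_wedge, Set.inter_comm]
  · rw [M.lamNeg_wedge, M.lamNeg_wedge]
    ext x
    constructor
    · rintro ((⟨h1, h2⟩ | ⟨h1, h2⟩) | ⟨h1, h2⟩)
      · exact Or.inl (Or.inr ⟨h2, h1⟩)
      · exact Or.inl (Or.inl ⟨h2, h1⟩)
      · exact Or.inr ⟨h2, h1⟩
    · rintro ((⟨h1, h2⟩ | ⟨h1, h2⟩) | ⟨h1, h2⟩)
      · exact Or.inl (Or.inr ⟨h2, h1⟩)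
      · exact Or.inl (Or.inl ⟨h2, h1⟩)
      · exact Or.inr ⟨h2, h1⟩

lemma PreMeasureSpace.mu_eq_zero_of_posEmpty {X I J : Type*}
    (M : PreMeasureSpace X I J) (l : I) (h : M.lamPos l = ∅) : M.mu l = 0 := by
  by_contra hne
  have hpos : 0 < M.mu l := lt_of_le_of_ne (M.mu_nonneg l) (Ne.symm hne)
  have hconst : ∀ m, iterMeet M.wedgeI (fun _ => l) m = l := by
    intro m
    induction m with
    | zero => rfl
    | succ n ih => simp [iterMeet, ih, M.wedge_self]
  have htend : Tendsto (fun m => M.mu (iterMeet M.wedgeI (fun _ => l) m))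
      atTop (𝓝 (M.mu l)) := by
    simp only [hconst]; exact tendsto_const_nhds
  obtain ⟨x, hx⟩ := M.pms4 (fun _ => l) (M.mu l) htend hpos
  have := hx 0
  rw [h] at this
  exact this

/-- Monotonicity of a pre-measure: if on the common domain
`F' = (λ₀¹(i) ∪ λ₀⁰(i)) ∩ (λ₀¹(j) ∪ λ₀⁰(j))` the characteristic function of
`λ₀(i)` is pointwise at most that of `λ₀(j)`, then `μ(i) ≤ μ(j)`. -/
theorem mu_mono_of_chi_le {X I J : Type*} (M : PreMeasureSpace X I J) (i j : I)
    (hle : ∀ x ∈ (M.lamPos i ∪ M.lamNeg i) ∩ (M.lamPos j ∪ M.lamNeg j),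
      M.chi i x ≤ M.chi j x) :
    M.mu i ≤ M.mu j := by
  obtain ⟨l, hl, hmi⟩ := M.pms2 i (M.h j) (M.wedgeI i j) (M.h_wedge i j)
  obtain ⟨l', _, hmj⟩ := M.pms2 j (M.h i) (M.wedgeI j i) (M.h_wedge j i)
  have hposl : M.lamPos l = M.lamPos i ∩ M.lamNeg j := by
    rw [M.h_pos, hl, M.wedge_pos, M.compl_pos, ← M.h_pos, ← M.h_neg]
  have hempty : M.lamPos l = ∅ := by
    rw [hposl]
    ext x
    simp only [Set.mem_inter_iff, Set.mem_empty_iff_false, iff_false, not_and]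
    intro hxi hxj
    have hmem : x ∈ (M.lamPos i ∪ M.lamNeg i) ∩ (M.lamPos j ∪ M.lamNeg j) :=
      ⟨Or.inl hxi, Or.inr hxj⟩
    have h1 : M.chi i x = 1 := by simp [PreMeasureSpace.chi, hxi]
    have h2 : M.chi j x = 0 := by
      simp only [PreMeasureSpace.chi]
      rw [if_neg]
      intro hxpj
      exact M.apart_irrefl x x rfl (M.lam_apart j x hxpj x hxj)
    have := hle x hmem
    rw [h1, h2] at this
    linarith
  have hl0 : M.mu l = 0 := M.mu_eq_zero_of_posEmpty l hempty
  rw [hmi, hmj, hl0, M.wedge_comm i j]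
  have := M.mu_nonneg l'
  linarith
end

section
/- In a pre-measure space, let v = (a_k, i_k)_{k=1}^n and w = (b_ℓ, j_ℓ)_{ℓ=1}^m represent simple functions, and suppose that ∑_{k=1}^n a_k · χ_{λ₀(i_k)}(x) ≤ ∑_{ℓ=1}^m b_ℓ · χ_{λ₀(j_ℓ)}(x) for all x in the intersection F of all domains λ₀¹(i_k) ∪ λ₀⁰(i_k) and λ₀¹(j_ℓ) ∪ λ₀⁰(j_ℓ). Then ∑_{k=1}^n a_k · μ(i_k) ≤ ∑_{ℓ=1}^m b_ℓ · μ(j_ℓ). -/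
open Filter Topology

namespace PreMeasureSpace

variable {X I J : Type*} (M : PreMeasureSpace X I J)

lemma disj {i : I} {x : X} (hp : x ∈ M.lamPos i) (hn : x ∈ M.lamNeg i) : False :=
  M.apart_irrefl x x rfl (M.lam_apart i x hp x hn)

lemma lamPos_wedge_s10 (i j : I) :
    M.lamPos (M.wedgeI i j) = M.lamPos i ∩ M.lamPos j := by
  rw [M.h_pos, M.h_wedge, M.wedge_pos, ← M.h_pos, ← M.h_pos]

lemma lamNeg_wedge_s10 (i j : I) :
    M.lamNeg (M.wedgeI i j) = (M.lamPos i ∩ M.lamNeg j) ∪ (M.lamNeg i ∩ M.lamPos j)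
      ∪ (M.lamNeg i ∩ M.lamNeg j) := by
  rw [M.h_neg, M.h_wedge, M.wedge_neg, ← M.h_pos, ← M.h_pos, ← M.h_neg, ← M.h_neg]

lemma lamPos_sminus (i j : I) :
    M.lamPos (M.sminusI i j) = M.lamPos i ∩ M.lamNeg j := by
  rw [M.h_pos, M.h_sminus, M.wedge_pos, M.compl_pos, ← M.h_pos, ← M.h_neg]

lemma lamNeg_sminus (i j : I) :
    M.lamNeg (M.sminusI i j) = (M.lamPos i ∩ M.lamPos j) ∪ (M.lamNeg i ∩ M.lamNeg j)
      ∪ (M.lamNeg i ∩ M.lamPos j) := by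
  rw [M.h_neg, M.h_sminus, M.wedge_neg, M.compl_pos, M.compl_neg,
    ← M.h_pos, ← M.h_pos, ← M.h_neg, ← M.h_neg]

lemma mem_dom_wedge {i j : I} {x : X} :
    x ∈ M.lamPos (M.wedgeI i j) ∪ M.lamNeg (M.wedgeI i j) ↔
      (x ∈ M.lamPos i ∪ M.lamNeg i) ∧ (x ∈ M.lamPos j ∪ M.lamNeg j) := by
  simp only [lamPos_wedge_s10, lamNeg_wedge_s10, Set.mem_union, Set.mem_inter_iff]
  tauto

lemma mem_dom_sminus {i j : I} {x : X} :
    x ∈ M.lamPos (M.sminusI i j) ∪ M.lamNeg (M.sminusI i j) ↔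
      (x ∈ M.lamPos i ∪ M.lamNeg i) ∧ (x ∈ M.lamPos j ∪ M.lamNeg j) := by
  simp only [lamPos_sminus, lamNeg_sminus, Set.mem_union, Set.mem_inter_iff]
  tauto

lemma lamNeg_eq (i : I) :
    M.lamNeg i = (M.lamPos i ∪ M.lamNeg i) \ M.lamPos i := by
  ext x
  constructor
  · intro hn
    exact ⟨Or.inr hn, fun hp => M.disj hp hn⟩
  · rintro ⟨(hp | hn), hnp⟩
    · exact absurd hp hnp
    · exact hn

lemma wedge_self_s10 (i : I) : M.wedgeI i i = i := by
  apply M.lam_set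
  · rw [lamPos_wedge_s10, Set.inter_self]
  · rw [lamNeg_wedge_s10]
    ext x
    simp only [Set.mem_union, Set.mem_inter_iff]
    tauto

lemma iterMeet_const (i : I) (m : ℕ) : iterMeet M.wedgeI (fun _ => i) m = i := by
  induction m with
  | zero => rfl
  | succ k ih => rw [iterMeet, ih, wedge_self_s10]

lemma exists_mem_pos {i : I} (h : 0 < M.mu i) : ∃ x, x ∈ M.lamPos i := by
  have ht : Filter.Tendsto (fun m => M.mu (iterMeet M.wedgeI (fun _ => i) m))
      Filter.atTop (nhds (M.mu i)) := by
    simp only [M.iterMeet_const]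
    exact tendsto_const_nhds
  obtain ⟨x, hx⟩ := M.pms4 _ _ ht h
  exact ⟨x, hx 0⟩

lemma mu_eq_zero {i : I} (h : ∀ x, x ∉ M.lamPos i) : M.mu i = 0 := by
  rcases eq_or_lt_of_le (M.mu_nonneg i) with h0 | h0
  · exact h0.symm
  · obtain ⟨x, hx⟩ := M.exists_mem_pos h0
    exact absurd hx (h x)

lemma mu_split (i j : I) : M.mu i = M.mu (M.wedgeI i j) + M.mu (M.sminusI i j) := by
  obtain ⟨l, hl, hmu⟩ := M.pms2 i (M.h j) (M.wedgeI i j) (M.h_wedge i j)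
  have : l = M.sminusI i j := M.h_inj (by rw [hl, M.h_sminus])
  rw [hmu, this]

end PreMeasureSpace

/-- Iterated refinement: apply `∧ c t` or `∖ c t` to `base` for `t = 0, …, k-1`,
according to the boolean choice `s t`. -/
def PreMeasureSpace.mUT {X I J : Type*} (M : PreMeasureSpace X I J) :
    (ℕ → I) → (ℕ → Bool) → I → ℕ → I
  | _, _, base, 0 => base
  | c, s, base, k + 1 => M.mUT (fun t => c (t + 1)) (fun t => s (t + 1))
      (if s 0 then M.wedgeI base (c 0) else M.sminusI base (c 0)) k

namespace PreMeasureSpace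

variable {X I J : Type*} (M : PreMeasureSpace X I J)

lemma mUT_congr : ∀ (k : ℕ) (c : ℕ → I) (s s' : ℕ → Bool) (base : I),
    (∀ t < k, s t = s' t) → M.mUT c s base k = M.mUT c s' base k
  | 0, _, _, _, _, _ => rfl
  | k + 1, c, s, s', base, hss => by
    rw [mUT, mUT, hss 0 (Nat.succ_pos k)]
    exact mUT_congr k _ _ _ _ (fun t ht => hss (t + 1) (by omega))

lemma pos_mUT : ∀ (k : ℕ) (c : ℕ → I) (s : ℕ → Bool) (base : I) (x : X),
    x ∈ M.lamPos (M.mUT c s base k) ↔ x ∈ M.lamPos base ∧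
      ∀ t < k, x ∈ (if s t then M.lamPos (c t) else M.lamNeg (c t))
  | 0, c, s, base, x => by simp [mUT]
  | k + 1, c, s, base, x => by
    rw [mUT, pos_mUT k]
    constructor
    · rintro ⟨h0, hrest⟩
      by_cases hs : s 0
      · rw [if_pos hs, lamPos_wedge_s10] at h0
        refine ⟨h0.1, fun t ht => ?_⟩
        match t with
        | 0 => simpa [hs] using h0.2
        | t + 1 => exact hrest t (by omega)
      · rw [if_neg hs, lamPos_sminus] at h0
        refine ⟨h0.1, fun t ht => ?_⟩
        match t with
        | 0 => simpa [hs] using h0.2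
        | t + 1 => exact hrest t (by omega)
    · rintro ⟨hb, hall⟩
      refine ⟨?_, fun t ht => hall (t + 1) (by omega)⟩
      have h0 := hall 0 (by omega)
      by_cases hs : s 0
      · rw [if_pos hs, lamPos_wedge_s10]
        exact ⟨hb, by simpa [hs] using h0⟩
      · rw [if_neg hs, lamPos_sminus]
        exact ⟨hb, by simpa [hs] using h0⟩

lemma dom_mUT : ∀ (k : ℕ) (c : ℕ → I) (s : ℕ → Bool) (base : I) (x : X),
    x ∈ M.lamPos (M.mUT c s base k) ∪ M.lamNeg (M.mUT c s base k) ↔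
      (x ∈ M.lamPos base ∪ M.lamNeg base) ∧
      ∀ t < k, x ∈ M.lamPos (c t) ∪ M.lamNeg (c t)
  | 0, c, s, base, x => by simp [mUT]
  | k + 1, c, s, base, x => by
    rw [mUT, dom_mUT k]
    have hbase : x ∈ M.lamPos (if s 0 then M.wedgeI base (c 0) else M.sminusI base (c 0)) ∪
        M.lamNeg (if s 0 then M.wedgeI base (c 0) else M.sminusI base (c 0)) ↔
        (x ∈ M.lamPos base ∪ M.lamNeg base) ∧ (x ∈ M.lamPos (c 0) ∪ M.lamNeg (c 0)) := by
      by_cases hs : s 0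
      · rw [if_pos hs]; exact M.mem_dom_wedge
      · rw [if_neg hs]; exact M.mem_dom_sminus
    rw [hbase]
    constructor
    · rintro ⟨⟨hb, h0⟩, hrest⟩
      refine ⟨hb, fun t ht => ?_⟩
      match t with
      | 0 => exact h0
      | t + 1 => exact hrest t (by omega)
    · rintro ⟨hb, hall⟩
      exact ⟨⟨hb, hall 0 (by omega)⟩, fun t ht => hall (t + 1) (by omega)⟩

/-- Extend a boolean vector on `Fin k` to `ℕ` by `false`. -/
def extB (k : ℕ) (s : Fin k → Bool) : ℕ → Bool :=
  fun t => if h : t < k then s ⟨t, h⟩ else false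

lemma mUT_sum : ∀ (k : ℕ) (c : ℕ → I) (base : I),
    M.mu base = ∑ s : Fin k → Bool, M.mu (M.mUT c (extB k s) base k)
  | 0, c, base => by simp [mUT]
  | k + 1, c, base => by
    rw [← Equiv.sum_comp (Fin.consEquiv (fun _ : Fin (k + 1) => Bool))
      (fun s => M.mu (M.mUT c (extB (k + 1) s) base (k + 1)))]
    rw [Fintype.sum_prod_type]
    have hterm : ∀ (b : Bool) (s : Fin k → Bool),
        M.mu (M.mUT c (extB (k + 1) (Fin.cons b s)) base (k + 1)) =
        M.mu (M.mUT (fun t => c (t + 1)) (extB k s)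
          (if b then M.wedgeI base (c 0) else M.sminusI base (c 0)) k) := by
      intro b s
      rw [mUT]
      have h0 : extB (k + 1) (Fin.cons b s) 0 = b := by
        simp [extB]
      have hsh : ∀ t < k, extB (k + 1) (Fin.cons b s) (t + 1) = extB k s t := by
        intro t ht
        simp only [extB, dif_pos (Nat.succ_lt_succ ht), dif_pos ht]
        exact congrArg s rfl |>.symm ▸ (by
          have : (⟨t + 1, Nat.succ_lt_succ ht⟩ : Fin (k + 1)) = Fin.succ ⟨t, ht⟩ := rfl
          rw [this, Fin.cons_succ])
      rw [h0]
      exact congrArg M.mu (M.mUT_congr k _ _ _ _ hsh)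
    have : ∀ b : Bool, (∑ s : Fin k → Bool,
        M.mu (M.mUT c (extB (k + 1) ((Fin.consEquiv fun _ => Bool) (b, s))) base (k + 1))) =
        M.mu (if b then M.wedgeI base (c 0) else M.sminusI base (c 0)) := by
      intro b
      rw [show (∑ s : Fin k → Bool,
          M.mu (M.mUT c (extB (k + 1) ((Fin.consEquiv fun _ => Bool) (b, s))) base (k + 1))) =
          ∑ s : Fin k → Bool, M.mu (M.mUT (fun t => c (t + 1)) (extB k s)
            (if b then M.wedgeI base (c 0) else M.sminusI base (c 0)) k) from
        Finset.sum_congr rfl (fun s _ => hterm b s)]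
      exact (mUT_sum k _ _).symm
    rw [Fintype.sum_bool]
    rw [this true, this false]
    simp only [if_pos, if_neg, Bool.false_eq_true, not_false_iff]
    exact M.mu_split base (c 0)

lemma atom_zero (k : ℕ) (c : ℕ → I) (s : ℕ → Bool) {t : ℕ} (ht : t < k)
    (hst : s t = false) : M.mu (M.mUT c s (c t) k) = 0 := by
  apply M.mu_eq_zero
  intro x hx
  rw [M.pos_mUT] at hx
  have h2 : x ∈ M.lamNeg (c t) := by simpa [hst] using hx.2 t ht
  exact M.disj hx.1 h2

lemma atom_eq (k : ℕ) (c : ℕ → I) (s : ℕ → Bool) {t t' : ℕ} (ht : t < k) (ht' : t' < k)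
    (hst : s t = true) (hst' : s t' = true) :
    M.mUT c s (c t) k = M.mUT c s (c t') k := by
  have hpos : ∀ u, u < k → s u = true → ∀ x : X,
      x ∈ M.lamPos (M.mUT c s (c u) k) ↔
        ∀ v < k, x ∈ (if s v then M.lamPos (c v) else M.lamNeg (c v)) := by
    intro u hu hsu x
    rw [M.pos_mUT]
    exact ⟨fun h => h.2, fun h => ⟨by simpa [hsu] using h u hu, h⟩⟩
  have hdom : ∀ u, u < k → ∀ x : X,
      x ∈ M.lamPos (M.mUT c s (c u) k) ∪ M.lamNeg (M.mUT c s (c u) k) ↔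
        ∀ v < k, x ∈ M.lamPos (c v) ∪ M.lamNeg (c v) := by
    intro u hu x
    rw [M.dom_mUT]
    exact ⟨fun h => h.2, fun h => ⟨h u hu, h⟩⟩
  have hP : M.lamPos (M.mUT c s (c t) k) = M.lamPos (M.mUT c s (c t') k) := by
    ext x
    rw [hpos t ht hst x, hpos t' ht' hst' x]
  have hD : M.lamPos (M.mUT c s (c t) k) ∪ M.lamNeg (M.mUT c s (c t) k) =
      M.lamPos (M.mUT c s (c t') k) ∪ M.lamNeg (M.mUT c s (c t') k) := by
    ext x
    rw [hdom t ht x, hdom t' ht' x]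
  apply M.lam_set _ _ hP
  rw [M.lamNeg_eq (M.mUT c s (c t) k), M.lamNeg_eq (M.mUT c s (c t') k), hD, hP]

end PreMeasureSpace

/-- Monotonicity of the simple-function integral: if
`∑_k a_k χ_{λ₀(i_k)} ≤ ∑_ℓ b_ℓ χ_{λ₀(j_ℓ)}` pointwise on the intersection `F`
of all the domains, then `∑_k a_k μ(i_k) ≤ ∑_ℓ b_ℓ μ(j_ℓ)`. -/
theorem simple_function_integral_mono {X I J : Type*}
    (M : PreMeasureSpace X I J) (n m : ℕ)
    (a : Fin n → ℝ) (idx : Fin n → I) (b : Fin m → ℝ) (jdx : Fin m → I)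
    (hle : ∀ x ∈ (⋂ k, M.lamPos (idx k) ∪ M.lamNeg (idx k)) ∩
        (⋂ l, M.lamPos (jdx l) ∪ M.lamNeg (jdx l)),
      ∑ k, a k * M.chi (idx k) x ≤ ∑ l, b l * M.chi (jdx l) x) :
    ∑ k, a k * M.mu (idx k) ≤ ∑ l, b l * M.mu (jdx l) := by
  classical
  obtain ⟨i₀, -⟩ := M.pms3
  set c : ℕ → I := fun t =>
    if h : t < n then idx ⟨t, h⟩ else if h' : t < n + m then jdx ⟨t - n, by omega⟩ else i₀
    with hc
  set d : ℕ → ℝ := fun t =>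
    if h : t < n then a ⟨t, h⟩ else if h' : t < n + m then -(b ⟨t - n, by omega⟩) else 0
    with hd
  have hc1 : ∀ k : Fin n, c k.val = idx k := by
    intro k
    simp only [hc]
    rw [dif_pos k.isLt]
  have hd1 : ∀ k : Fin n, d k.val = a k := by
    intro k
    simp only [hd]
    rw [dif_pos k.isLt]
  have hc2 : ∀ l : Fin m, c (n + l.val) = jdx l := by
    intro l
    simp only [hc]
    rw [dif_neg (by omega), dif_pos (by omega)]
    exact congrArg jdx (Fin.ext (by simp))
  have hd2 : ∀ l : Fin m, d (n + l.val) = -(b l) := by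
    intro l
    simp only [hd]
    rw [dif_neg (by omega), dif_pos (by omega)]
    exact congrArg (fun z => -(b z)) (Fin.ext (by simp))
  have hsplit : ∀ f : ℕ → ℝ, ∑ t ∈ Finset.range (n + m), f t =
      (∑ k : Fin n, f k.val) + ∑ l : Fin m, f (n + l.val) := by
    intro f
    rw [← Fin.sum_univ_eq_sum_range f (n + m), Fin.sum_univ_add]
    simp
  suffices hmain : ∑ t ∈ Finset.range (n + m), d t * M.mu (c t) ≤ 0 by
    rw [hsplit] at hmain
    have e1 : ∑ k : Fin n, d k.val * M.mu (c k.val) = ∑ k, a k * M.mu (idx k) :=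
      Finset.sum_congr rfl fun k _ => by rw [hc1, hd1]
    have e2 : ∑ l : Fin m, d (n + l.val) * M.mu (c (n + l.val)) =
        ∑ l, -(b l * M.mu (jdx l)) :=
      Finset.sum_congr rfl fun l _ => by rw [hc2, hd2]; ring
    rw [e1, e2, Finset.sum_neg_distrib] at hmain
    linarith
  set N := n + m with hN
  have hzero : ∀ (s : ℕ → Bool) (t : ℕ), t < N → s t = false →
      M.mu (M.mUT c s (c t) N) = 0 := fun s t ht hst => M.atom_zero N c s ht hst
  calc ∑ t ∈ Finset.range N, d t * M.mu (c t)
      = ∑ t ∈ Finset.range N, d t *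
          ∑ s : Fin N → Bool, M.mu (M.mUT c (PreMeasureSpace.extB N s) (c t) N) :=
        Finset.sum_congr rfl fun t _ => by rw [← M.mUT_sum N c (c t)]
    _ = ∑ t ∈ Finset.range N, ∑ s : Fin N → Bool,
          d t * M.mu (M.mUT c (PreMeasureSpace.extB N s) (c t) N) :=
        Finset.sum_congr rfl fun t _ => Finset.mul_sum _ _ _
    _ = ∑ s : Fin N → Bool, ∑ t ∈ Finset.range N,
          d t * M.mu (M.mUT c (PreMeasureSpace.extB N s) (c t) N) := Finset.sum_comm
    _ ≤ 0 := by
        apply Finset.sum_nonpos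
        intro s _
        by_cases hex : ∃ t₀ : Fin N, s t₀ = true
        · obtain ⟨t₀, ht₀⟩ := hex
          have ht₀' : PreMeasureSpace.extB N s t₀.val = true := by
            simp [PreMeasureSpace.extB, t₀.isLt, ht₀]
          set A := M.mUT c (PreMeasureSpace.extB N s) (c t₀.val) N with hA
          have hAeq : ∀ t, t < N → PreMeasureSpace.extB N s t = true →
              M.mUT c (PreMeasureSpace.extB N s) (c t) N = A :=
            fun t ht h => M.atom_eq N c (PreMeasureSpace.extB N s) ht t₀.isLt h ht₀'
          have hform : ∑ t ∈ Finset.range N,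
              d t * M.mu (M.mUT c (PreMeasureSpace.extB N s) (c t) N)
              = (∑ t ∈ Finset.range N,
                  d t * (if PreMeasureSpace.extB N s t then (1 : ℝ) else 0)) * M.mu A := by
            rw [Finset.sum_mul]
            refine Finset.sum_congr rfl fun t ht => ?_
            rw [Finset.mem_range] at ht
            cases hst : PreMeasureSpace.extB N s t with
            | false => rw [hzero _ t ht hst]; simp
            | true => rw [hAeq t ht hst]; simp
          rw [hform]
          rcases eq_or_lt_of_le (M.mu_nonneg A) with h0 | h0
          · rw [← h0, mul_zero]
          · obtain ⟨x, hx⟩ := M.exists_mem_pos h0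
            have hx' := ((M.pos_mUT N c (PreMeasureSpace.extB N s) (c t₀.val) x).mp hx).2
            have hdomx : ∀ t, t < N → x ∈ M.lamPos (c t) ∪ M.lamNeg (c t) := by
              intro t ht
              have h2 := hx' t ht
              cases h : PreMeasureSpace.extB N s t with
              | false => rw [h] at h2; exact Or.inr (by simpa using h2)
              | true => rw [h] at h2; exact Or.inl (by simpa using h2)
            have hxF : x ∈ (⋂ k, M.lamPos (idx k) ∪ M.lamNeg (idx k)) ∩
                (⋂ l, M.lamPos (jdx l) ∪ M.lamNeg (jdx l)) := by
              constructor
              · refine Set.mem_iInter.mpr fun k => ?_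
                have := hdomx k.val (by omega)
                rwa [hc1 k] at this
              · refine Set.mem_iInter.mpr fun l => ?_
                have := hdomx (n + l.val) (by omega)
                rwa [hc2 l] at this
            have hineq := hle x hxF
            have hchi : ∀ t, t < N →
                M.chi (c t) x = (if PreMeasureSpace.extB N s t then (1 : ℝ) else 0) := by
              intro t ht
              have h2 := hx' t ht
              cases h : PreMeasureSpace.extB N s t with
              | false =>
                rw [h] at h2
                have hneg : x ∈ M.lamNeg (c t) := by simpa using h2
                simp only [PreMeasureSpace.chi]
                rw [if_neg (fun hp => M.disj hp hneg)]; simp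
              | true =>
                rw [h] at h2
                have hpos : x ∈ M.lamPos (c t) := by simpa using h2
                simp only [PreMeasureSpace.chi]
                rw [if_pos hpos]; simp
            have hC : ∑ t ∈ Finset.range N,
                d t * (if PreMeasureSpace.extB N s t then (1 : ℝ) else 0)
                = ∑ k, a k * M.chi (idx k) x - ∑ l, b l * M.chi (jdx l) x := by
              rw [hsplit]
              have e1 : ∑ k : Fin n,
                  d k.val * (if PreMeasureSpace.extB N s k.val then (1 : ℝ) else 0)
                  = ∑ k, a k * M.chi (idx k) x :=
                Finset.sum_congr rfl fun k _ => by
                  rw [hd1, ← hchi k.val (by omega), hc1]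
              have e2 : ∑ l : Fin m,
                  d (n + l.val) * (if PreMeasureSpace.extB N s (n + l.val) then (1 : ℝ) else 0)
                  = ∑ l, -(b l * M.chi (jdx l) x) :=
                Finset.sum_congr rfl fun l _ => by
                  rw [hd2, ← hchi (n + l.val) (by omega), hc2]; ring
              rw [e1, e2, Finset.sum_neg_distrib]
              ring
            rw [hC]
            exact mul_nonpos_iff.mpr (Or.inr ⟨sub_nonpos.mpr hineq, le_of_lt h0⟩)
        · push_neg at hex
          refine le_of_eq (Finset.sum_eq_zero fun t ht => ?_)
          rw [Finset.mem_range] at ht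
          have hst : PreMeasureSpace.extB N s t = false := by
            simp only [PreMeasureSpace.extB, dif_pos ht]
            exact Bool.not_eq_true _ |>.mp (hex ⟨t, ht⟩)
          rw [hzero _ t ht hst, mul_zero]
end

section
/- In a pre-integration space (X, I, Λ, ∫), for every i ∈ I, if the partial function f_i is nonnegative on its domain, then ∫ i ≥ 0. -/
open Filter Topology

/-- A pre-integration space `(X, I, Λ, ∫)`: an inhabited set `X` with an
apartness relation, an `I`-set `Λ` of real-valued partial functions on `X`
(each index `i` has a domain `dom i` and a function `f i`, and equal partial
functions have equal indices), operations on `I` realizing scalar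
multiplication, addition, absolute value and min-with-1 of the partial
functions, and a functional `∫ = integ : I → ℝ` satisfying (PIS1)–(PIS4). -/
structure PreIntegrationSpace (X I : Type*) where
  inhab : Nonempty X
  apart : X → X → Prop
  apart_irrefl : ∀ x y : X, x = y → apart x y → False
  apart_symm : ∀ x y : X, apart x y → apart y x
  apart_cotrans : ∀ x y : X, apart x y → ∀ z : X, apart x z ∨ apart y z
  dom : I → Set X
  f : I → X → ℝ
  lam_set : ∀ i j : I, dom i = dom j → (∀ x ∈ dom i, f i x = f j x) → i = j
  smul : ℝ → I → I
  add : I → I → I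
  abs : I → I
  min1 : I → I
  integ : I → ℝ
  dom_smul : ∀ a i, dom (smul a i) = dom i
  f_smul : ∀ a i, ∀ x ∈ dom i, f (smul a i) x = a * f i x
  dom_add : ∀ i j, dom (add i j) = dom i ∩ dom j
  f_add : ∀ i j, ∀ x ∈ dom i ∩ dom j, f (add i j) x = f i x + f j x
  dom_abs : ∀ i, dom (abs i) = dom i
  f_abs : ∀ i, ∀ x ∈ dom i, f (abs i) x = |f i x|
  dom_min1 : ∀ i, dom (min1 i) = dom i
  f_min1 : ∀ i, ∀ x ∈ dom i, f (min1 i) x = min (f i x) 1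
  pis1 : ∀ (a b : ℝ) (i j : I),
    integ (add (smul a i) (smul b j)) = a * integ i + b * integ j
  pis2 : ∀ (i : I) (α : ℕ → I) (ℓ : ℝ),
    (∀ m, ∀ x ∈ dom (α m), 0 ≤ f (α m) x) →
    Tendsto (fun n => ∑ k ∈ Finset.range n, integ (α k)) atTop (𝓝 ℓ) →
    ℓ < integ i →
    ∃ x, x ∈ dom i ∧ (∀ n, x ∈ dom (α n)) ∧
      ∃ ℓ' : ℝ, Tendsto (fun n => ∑ k ∈ Finset.range n, f (α k) x) atTop (𝓝 ℓ') ∧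
        ℓ' < f i x
  pis3 : ∃ i : I, integ i = 1
  pis4 : ∀ i : I,
    Tendsto (fun m : ℕ => integ (smul (m : ℝ) (min1 (smul ((m : ℝ))⁻¹ i))))
      atTop (𝓝 (integ i)) ∧
    Tendsto (fun m : ℕ => integ (smul ((m : ℝ))⁻¹ (min1 (smul (m : ℝ) (abs i)))))
      atTop (𝓝 0)

/-- In a pre-integration space, if `f_i` is nonnegative on its domain, then
`∫ i ≥ 0`. -/
theorem integ_nonneg_of_f_nonneg {X I : Type*} (P : PreIntegrationSpace X I)
    (i : I) (hi : ∀ x ∈ P.dom i, 0 ≤ P.f i x) : 0 ≤ P.integ i := by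
  -- `0·i + 0·i = 0·i` as partial functions, so `∫(0·i) = 0` by PIS1.
  have hdom0 : P.dom (P.smul 0 i) = P.dom i := P.dom_smul 0 i
  have hadd0 : P.add (P.smul 0 i) (P.smul 0 i) = P.smul 0 i := by
    apply P.lam_set
    · rw [P.dom_add, hdom0, Set.inter_self]
    · intro x hx
      simp only [P.dom_add, P.dom_smul, Set.inter_self] at hx
      rw [P.f_add _ _ x (by rw [hdom0, Set.inter_self]; exact hx),
        P.f_smul 0 i x hx]
      ring
  have hint0 : P.integ (P.smul 0 i) = 0 := by
    have := P.pis1 0 0 i i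
    rw [hadd0] at this
    linarith
  -- `(-1)·i + 0·i = (-1)·i`, so `∫((-1)·i) = -∫ i` by PIS1.
  have haddm : P.add (P.smul (-1) i) (P.smul 0 i) = P.smul (-1) i := by
    apply P.lam_set
    · rw [P.dom_add, P.dom_smul, hdom0, Set.inter_self]
    · intro x hx
      simp only [P.dom_add, P.dom_smul, Set.inter_self] at hx
      rw [P.f_add _ _ x (by rw [P.dom_smul, hdom0, Set.inter_self]; exact hx),
        P.f_smul 0 i x hx,
        P.f_smul (-1) i x hx]
      ring
  have hintm : P.integ (P.smul (-1) i) = -P.integ i := by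
    have := P.pis1 (-1) 0 i i
    rw [haddm] at this
    linarith
  -- Suppose `∫ i < 0`; apply PIS2 to `-i` and the zero sequence.
  by_contra h
  push_neg at h
  have hlt : (0 : ℝ) < P.integ (P.smul (-1) i) := by rw [hintm]; linarith
  obtain ⟨x, hxd, hxn, ℓ', hℓ'tend, hℓ'lt⟩ :=
    P.pis2 (P.smul (-1) i) (fun _ => P.smul 0 i) 0
      (fun m x hx => by
        rw [hdom0] at hx
        rw [P.f_smul 0 i x hx]; simp)
      (by
        have : (fun n => ∑ k ∈ Finset.range n, P.integ (P.smul 0 i))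
            = fun _ => 0 := by
          funext n; simp [hint0]
        rw [this]; exact tendsto_const_nhds)
      hlt
  have hxi : x ∈ P.dom i := by rwa [P.dom_smul] at hxd
  have hℓ'0 : ℓ' = 0 := by
    have : (fun n => ∑ k ∈ Finset.range n, P.f (P.smul 0 i) x)
        = fun _ => 0 := by
      funext n
      simp [P.f_smul 0 i x hxi]
    rw [this] at hℓ'tend
    exact tendsto_nhds_unique hℓ'tend tendsto_const_nhds
  rw [hℓ'0, P.f_smul (-1) i x hxi] at hℓ'lt
  have := hi x hxi
  linarith
end

section
/- In a pre-integration space (X, I, Λ, ∫), let i ∈ I and α : ℕ → I be such that f_{α(n)} ≥ 0 for all n, the series ∑_n ∫α(n) converges to ℓ, and ∫i + ℓ > 0. Then there exists x in the domain of f_i and of all f_{α(n)} such that ∑_n f_{α(n)}(x) converges and f_i(x) + ∑_n f_{α(n)}(x) > 0. -/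
open Filter Topology

/-- Variant of (PIS2): if all `f_{α(n)} ≥ 0`, the series `∑_n ∫α(n)` converges
to `ℓ`, and `∫i + ℓ > 0`, then there exists a point `x` in the domain of `f_i`
and of all the `f_{α(n)}` such that `∑_n f_{α(n)}(x)` converges and
`f_i(x) + ∑_n f_{α(n)}(x) > 0`. -/
theorem pis2_variant {X I : Type*} (P : PreIntegrationSpace X I)
    (i : I) (α : ℕ → I) (ℓ : ℝ)
    (hpos : ∀ n, ∀ x ∈ P.dom (α n), 0 ≤ P.f (α n) x)
    (hconv : Tendsto (fun n => ∑ k ∈ Finset.range n, P.integ (α k)) atTop (𝓝 ℓ))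
    (hlt : 0 < P.integ i + ℓ) :
    ∃ x, x ∈ P.dom i ∧ (∀ n, x ∈ P.dom (α n)) ∧
      ∃ s : ℝ, Tendsto (fun n => ∑ k ∈ Finset.range n, P.f (α k) x) atTop (𝓝 s) ∧
        0 < P.f i x + s := by

  classical
  -- iterated sums of indices
  let j : ℕ → I := fun N => Nat.rec i (fun k jk => P.add (P.smul 1 jk) (P.smul 1 (α k))) N
  have hjs : ∀ k, j (k+1) = P.add (P.smul 1 (j k)) (P.smul 1 (α k)) := fun k => rfl
  have hdom : ∀ k x, x ∈ P.dom (j k) ↔ x ∈ P.dom i ∧ ∀ m < k, x ∈ P.dom (α m) := by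
    intro k
    induction k with
    | zero => intro x; simp [j]
    | succ k ih =>
      intro x
      rw [hjs, P.dom_add, P.dom_smul, P.dom_smul]
      constructor
      · rintro ⟨hx1, hx2⟩
        obtain ⟨hxi, hxm⟩ := (ih x).mp hx1
        refine ⟨hxi, fun m hm => ?_⟩
        rcases Nat.lt_succ_iff_lt_or_eq.mp hm with h | h
        · exact hxm m h
        · exact h ▸ hx2
      · rintro ⟨hxi, hxm⟩
        exact ⟨(ih x).mpr ⟨hxi, fun m hm => hxm m (hm.trans (Nat.lt_succ_self k))⟩,
          hxm k (Nat.lt_succ_self k)⟩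
  have hinteg : ∀ k, P.integ (j k) = P.integ i + ∑ m ∈ Finset.range k, P.integ (α m) := by
    intro k
    induction k with
    | zero => simp [j]
    | succ k ih =>
      rw [hjs, P.pis1, ih, Finset.sum_range_succ]; ring
  have hf : ∀ k x, x ∈ P.dom (j k) →
      P.f (j k) x = P.f i x + ∑ m ∈ Finset.range k, P.f (α m) x := by
    intro k
    induction k with
    | zero => intro x _; simp [j]
    | succ k ih =>
      intro x hx
      have hx' : x ∈ P.dom (P.smul 1 (j k)) ∩ P.dom (P.smul 1 (α k)) := by
        rw [hjs, P.dom_add] at hx; exact hx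
      have hxj : x ∈ P.dom (j k) := by rw [P.dom_smul] at hx'; exact hx'.1
      have hxa : x ∈ P.dom (α k) := by rw [P.dom_smul, P.dom_smul] at hx'; exact hx'.2
      rw [hjs, P.f_add _ _ x hx', P.f_smul 1 _ x hxj, P.f_smul 1 _ x hxa,
        ih x hxj, Finset.sum_range_succ]
      ring
  -- choose N with a small tail
  set S : ℕ → ℝ := fun n => ∑ k ∈ Finset.range n, P.integ (α k) with hS
  have hN : ∃ N, ℓ - (P.integ i + ℓ) / 2 < S N := by
    have : ∀ᶠ n in atTop, ℓ - (P.integ i + ℓ) / 2 < S n :=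
      hconv.eventually (eventually_gt_nhds (by linarith))
    exact this.exists
  obtain ⟨N, hN⟩ := hN
  -- the tail series
  have htail : Tendsto (fun n => ∑ k ∈ Finset.range n, P.integ (α (N + k)))
      atTop (𝓝 (ℓ - S N)) := by
    have h1 : Tendsto (fun n => S (N + n)) atTop (𝓝 ℓ) :=
      hconv.comp (tendsto_add_atTop_nat N |>.comp (tendsto_id)) |>.congr (fun n => by
        simp [hS, Nat.add_comm])
    have h2 : Tendsto (fun n => S (N + n) - S N) atTop (𝓝 (ℓ - S N)) :=
      h1.sub tendsto_const_nhds
    refine h2.congr (fun n => ?_)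
    rw [hS]
    simp only [Finset.sum_range_add]
    ring
  have hkey : ℓ - S N < P.integ (j N) := by
    have hSN : S N = ∑ m ∈ Finset.range N, P.integ (α m) := rfl
    rw [hinteg N, ← hSN]
    linarith
  obtain ⟨x, hxj, hxβ, ℓ', hℓ'conv, hℓ'lt⟩ :=
    P.pis2 (j N) (fun k => α (N + k)) (ℓ - S N)
      (fun m x hx => hpos (N + m) x hx) htail hkey
  obtain ⟨hxi, hxm⟩ := (hdom N x).mp hxj
  have hxall : ∀ n, x ∈ P.dom (α n) := by
    intro n
    rcases lt_or_ge n N with h | h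
    · exact hxm n h
    · have := hxβ (n - N)
      rwa [Nat.add_sub_cancel' h] at this
  have hℓ'nonneg : 0 ≤ ℓ' :=
    ge_of_tendsto' hℓ'conv (fun n => Finset.sum_nonneg fun k _ =>
      hpos (N + k) x (hxβ k))
  refine ⟨x, hxi, hxall, (∑ m ∈ Finset.range N, P.f (α m) x) + ℓ', ?_, ?_⟩
  · have h1 : Tendsto (fun n => ∑ k ∈ Finset.range (N + n), P.f (α k) x) atTop
        (𝓝 ((∑ m ∈ Finset.range N, P.f (α m) x) + ℓ')) := by
      refine (tendsto_const_nhds.add hℓ'conv).congr (fun n => ?_)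
      rw [Finset.sum_range_add]
    have h2 : Tendsto (fun n => ∑ k ∈ Finset.range (n + N), P.f (α k) x) atTop
        (𝓝 ((∑ m ∈ Finset.range N, P.f (α m) x) + ℓ')) :=
      h1.congr (fun n => by rw [Nat.add_comm])
    exact (tendsto_add_atTop_iff_nat N).mp h2
  · have := hf N x hxj
    rw [this] at hℓ'lt
    linarith
end
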